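/- arXiv:1705.09798 — 6 statements merged into one kernel-verified Lean document; each statement's English description precedes it below -/
import Mathlib

section
/- Fix reals s with 0 < s ≤ 1, p > 0, x ≥ 0, reals a₁, a₂, a₃ > 0 with a₁+a₂+a₃ = s, and reals aᵢ⁺⁺ with 0 ≤ aᵢ⁺⁺ ≤ aᵢ for i ∈ {1,2,3} (indices cyclic mod 3). Then (x/3)·((Σᵢ₌₁³ s/aᵢ) − 9) + p·Σᵢ₌₁³ aᵢ⁺⁺·(aᵢ₋₁/aᵢ − 1) ≥ −p. (This says that the drift φ̇ of the potential φ = ln(a₁a₂a₃) under the oscillator dynamics is always at least −p.) -/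
/-!
The potential term is nonnegative: since `s = a₁ + a₂ + a₃`, the sum `∑ s / aᵢ` is
`(∑ aᵢ)(∑ aᵢ⁻¹) ≥ 9` by Cauchy–Schwarz. Each interaction term `aᵢ⁺⁺ (aᵢ₋₁/aᵢ − 1)` is at least
`−aᵢ⁺⁺ ≥ −aᵢ`, so the interaction sum is at least `−s ≥ −1`.
-/

open Finset

theorem Finset.card_sq_le_sum_mul_sum_inv {ι : Type*} (t : Finset ι) {a : ι → ℝ}
    (ha : ∀ i ∈ t, 0 < a i) : (#t : ℝ) ^ 2 ≤ (∑ i ∈ t, a i) * ∑ i ∈ t, (a i)⁻¹ := by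
  have h := sum_sq_le_sum_mul_sum_of_sq_le_mul t (r := fun _ ↦ (1 : ℝ))
    (fun i hi ↦ (ha i hi).le) (fun i hi ↦ (inv_pos.2 (ha i hi)).le)
    (fun i hi ↦ by rw [mul_inv_cancel₀ (ha i hi).ne']; norm_num)
  simpa using h

theorem Finset.neg_sum_le_sum_mul_sub_one {ι : Type*} (t : Finset ι) {a c r : ι → ℝ}
    (hc : ∀ i ∈ t, 0 ≤ c i ∧ c i ≤ a i) (hr : ∀ i ∈ t, 0 ≤ r i) :
    -∑ i ∈ t, a i ≤ ∑ i ∈ t, c i * (r i - 1) := by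
  rw [← sum_neg_distrib]
  gcongr with i hi
  obtain ⟨hc₀, hca⟩ := hc i hi
  nlinarith [mul_nonneg hc₀ (hr i hi)]

theorem oscillator_phi_drift_lower_bound_general
    (s p x : ℝ) (hs1 : s ≤ 1) (hp : 0 < p) (hx : 0 ≤ x)
    (a app : ZMod 3 → ℝ)
    (hpos : ∀ i, 0 < a i)
    (hsum : a 0 + a 1 + a 2 = s)
    (happ : ∀ i, 0 ≤ app i ∧ app i ≤ a i) :
    x / 3 * ((∑ i : ZMod 3, s / a i) - 9)
        + p * ∑ i : ZMod 3, app i * (a (i - 1) / a i - 1)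
      ≥ -p := by
  have hs_eq : s = ∑ i, a i := by rw [← hsum]; exact (Fin.sum_univ_three a).symm
  have hpotential : 9 ≤ ∑ i, s / a i := by
    have h := card_sq_le_sum_mul_sum_inv univ fun i _ ↦ hpos i
    rw [mul_sum, ← hs_eq] at h
    norm_num [div_eq_mul_inv] at h ⊢
    exact h
  have hinteraction : -1 ≤ ∑ i, app i * (a (i - 1) / a i - 1) := by
    have h := neg_sum_le_sum_mul_sub_one univ (fun i _ ↦ happ i)
      fun i _ ↦ (div_pos (hpos (i - 1)) (hpos i)).le
    rw [← hs_eq] at h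
    linarith
  have := mul_nonneg (div_nonneg hx zero_le_three) (sub_nonneg.2 hpotential)
  have := mul_le_mul_of_nonneg_left hinteraction hp.le
  linarith

/-- The drift `φ̇` of the potential `φ = ln(a₁a₂a₃)` under the oscillator
dynamics is always at least `−p`. -/
theorem oscillator_phi_drift_lower_bound
    (s p x : ℝ) (hs : 0 < s) (hs1 : s ≤ 1) (hp : 0 < p) (hx : 0 ≤ x)
    (a app : ZMod 3 → ℝ)
    (hpos : ∀ i, 0 < a i)
    (hsum : a 0 + a 1 + a 2 = s)
    (happ : ∀ i, 0 ≤ app i ∧ app i ≤ a i) :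
    x / 3 * ((∑ i : ZMod 3, s / a i) - 9)
        + p * ∑ i : ZMod 3, app i * (a (i - 1) / a i - 1)
      ≥ -p :=
  oscillator_phi_drift_lower_bound_general s p x hs1 hp hx a app hpos hsum happ
end

section
/- Fix reals s with 0 < s ≤ 1 and p > 0, reals a₁, a₂, a₃ > 0 with a₁+a₂+a₃ = s, and reals aᵢ⁺⁺ with 0 ≤ aᵢ⁺⁺ ≤ aᵢ for i ∈ {1,2,3} (indices cyclic mod 3). Define κᵢ = s·aᵢ⁺⁺/aᵢ − aᵢ, δᵢ = aᵢ − aᵢ₋₁, δ = √(δ₁²+δ₂²+δ₃²), κ = √(κ₁²+κ₂²+κ₃²), and ȧᵢ = p·aᵢ₋₁(aᵢ + aᵢ⁺⁺) − p·aᵢ(aᵢ₊₁ + aᵢ₊₁⁺⁺) (the oscillator drift with x = 0). Then Σᵢ₌₁³ ȧᵢ/aᵢ ≤ (p/s)·(−δ²/2 + κ·δ). -/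
/-!
Substituting `aᵢ⁺⁺ = aᵢ (aᵢ + κᵢ) / s`, the outflow term of species `i` becomes
`(p/s) aᵢ₊₁ (s + aᵢ₊₁ + κᵢ₊₁)`, which telescopes cyclically against the inflow terms. What remains
is exactly `(p/s) (-δ²/2 - Σ κᵢ δᵢ)`, for any number of species, and Cauchy–Schwarz bounds
`-Σ κᵢ δᵢ` by `κ δ`.
-/

section CyclicSums

variable {n : ℕ} [NeZero n]

namespace ZMod

theorem sum_comp_add_one (f : ZMod n → ℝ) : ∑ i, f (i + 1) = ∑ i, f i :=
  Equiv.sum_comp (Equiv.addRight 1) f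

theorem sum_comp_sub_one_sub_eq_zero (f : ZMod n → ℝ) : ∑ i, (f (i - 1) - f i) = 0 := by
  rw [Finset.sum_sub_distrib, sub_eq_zero]
  exact Equiv.sum_comp (Equiv.subRight 1) f

theorem sum_sub_one_sub_mul_self (a : ZMod n → ℝ) :
    ∑ i, (a (i - 1) - a i) * a i = -(∑ i, (a i - a (i - 1)) ^ 2) / 2 := by
  have hsplit : ∑ i, (a i - a (i - 1)) ^ 2
      = -2 * ∑ i, (a (i - 1) - a i) * a i + ∑ i, (a (i - 1) ^ 2 - a i ^ 2) := by
    rw [Finset.mul_sum, ← Finset.sum_add_distrib]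
    exact Finset.sum_congr rfl fun i _ ↦ by ring
  rw [hsplit, sum_comp_sub_one_sub_eq_zero fun i ↦ a i ^ 2]
  ring

end ZMod

theorem sum_oscillator_drift_div_eq (s p : ℝ) (hs : s ≠ 0) (a app : ZMod n → ℝ)
    (ha : ∀ i, a i ≠ 0) :
    ∑ i, (p * a (i - 1) * (a i + app i) - p * a i * (a (i + 1) + app (i + 1))) / a i
      = p / s * (-(∑ i, (a i - a (i - 1)) ^ 2) / 2
          - ∑ i, (s * app i / a i - a i) * (a i - a (i - 1))) := by
  set κ : ZMod n → ℝ := fun i ↦ s * app i / a i - a i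
  set outflow : ZMod n → ℝ := fun i ↦ a i * (s + a i + κ i)
  have hterm : ∀ i,
      (p * a (i - 1) * (a i + app i) - p * a i * (a (i + 1) + app (i + 1))) / a i
        = p / s * (a (i - 1) * (s + a i + κ i) - outflow (i + 1)) := by
    intro i
    simp only [outflow, κ]
    field_simp [ha i, ha (i + 1)]
    ring
  simp_rw [hterm]
  rw [← Finset.mul_sum, Finset.sum_sub_distrib, ZMod.sum_comp_add_one, ← Finset.sum_sub_distrib,
    ← ZMod.sum_sub_one_sub_mul_self]
  congr 1
  calc ∑ i, (a (i - 1) * (s + a i + κ i) - outflow i)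
      = s * ∑ i, (a (i - 1) - a i) + ∑ i, (a (i - 1) - a i) * a i
          - ∑ i, κ i * (a i - a (i - 1)) := by
        simp only [outflow, Finset.mul_sum, ← Finset.sum_add_distrib, ← Finset.sum_sub_distrib]
        exact Finset.sum_congr rfl fun i _ ↦ by ring
    _ = _ := by rw [ZMod.sum_comp_sub_one_sub_eq_zero, mul_zero, zero_add]

end CyclicSums

theorem oscillator_phi_drift_upper_bound_general
    (s p : ℝ) (hs : 0 < s) (hp : 0 < p)
    (a app : ZMod 3 → ℝ)
    (hpos : ∀ i, 0 < a i) :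
    (∑ i : ZMod 3,
        (p * a (i - 1) * (a i + app i) - p * a i * (a (i + 1) + app (i + 1))) / a i)
      ≤ p / s * (-(∑ i : ZMod 3, (a i - a (i - 1)) ^ 2) / 2
          + Real.sqrt (∑ i : ZMod 3, (s * app i / a i - a i) ^ 2)
            * Real.sqrt (∑ i : ZMod 3, (a i - a (i - 1)) ^ 2)) := by
  rw [sum_oscillator_drift_div_eq s p hs.ne' a app fun i ↦ (hpos i).ne', sub_eq_add_neg]
  gcongr
  rw [← Finset.sum_neg_distrib]
  simpa only [neg_mul, neg_sq] using Real.sum_mul_le_sqrt_mul_sqrt Finset.univ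
    (fun i ↦ -(s * app i / a i - a i)) fun i ↦ a i - a (i - 1)

/-- With no source (`x = 0`), the drift of the potential `φ = ln(a₁a₂a₃)`
satisfies `φ̇ ≤ (p/s)(−δ²/2 + κδ)`, where `δ = √(Σδᵢ²)`, `δᵢ = aᵢ − aᵢ₋₁`,
`κ = √(Σκᵢ²)`, `κᵢ = s·aᵢ⁺⁺/aᵢ − aᵢ`. -/
theorem oscillator_phi_drift_upper_bound
    (s p : ℝ) (hs : 0 < s) (hs1 : s ≤ 1) (hp : 0 < p)
    (a app : ZMod 3 → ℝ)
    (hpos : ∀ i, 0 < a i)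
    (hsum : a 0 + a 1 + a 2 = s)
    (happ : ∀ i, 0 ≤ app i ∧ app i ≤ a i) :
    (∑ i : ZMod 3,
        (p * a (i - 1) * (a i + app i) - p * a i * (a (i + 1) + app (i + 1))) / a i)
      ≤ p / s * (-(∑ i : ZMod 3, (a i - a (i - 1)) ^ 2) / 2
          + Real.sqrt (∑ i : ZMod 3, (s * app i / a i - a i) ^ 2)
            * Real.sqrt (∑ i : ZMod 3, (a i - a (i - 1)) ^ 2)) :=
  oscillator_phi_drift_upper_bound_general s p hs hp a app hpos
end

section
/- Fix reals s with 0 < s ≤ 1 and p > 0, reals a₁, a₂, a₃ > 0 with a₁+a₂+a₃ = s, and reals aᵢ⁺⁺ with 0 ≤ aᵢ⁺⁺ ≤ aᵢ for i ∈ {1,2,3} (indices cyclic mod 3). Define κᵢ = s·aᵢ⁺⁺/aᵢ − aᵢ, δᵢ = aᵢ − aᵢ₋₁, δ = √(δ₁²+δ₂²+δ₃²), κ = √(κ₁²+κ₂²+κ₃²), and ȧᵢ = p·aᵢ₋₁(aᵢ + aᵢ⁺⁺) − p·aᵢ(aᵢ₊₁ + aᵢ₊₁⁺⁺). Then for each i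 ∈ {1,2,3}: |ȧᵢ| ≤ p·aᵢ·(2δ + κ). -/
/-!
Substituting `aᵢ⁺⁺ = aᵢ (κᵢ + aᵢ) / s` writes the drift of species `i` as `p aᵢ` times
`(aᵢ₋₁ - aᵢ₊₁) + (aᵢ₋₁ κᵢ - aᵢ₊₁ κᵢ₊₁) / s + (aᵢ₋₁ (aᵢ - aᵢ₊₁) + aᵢ₊₁ (aᵢ₋₁ - aᵢ₊₁)) / s`.
The first and last terms are imbalances, the middle one corrective factors; since
`aᵢ₋₁ + aᵢ₊₁ ≤ s`, the two quotients are sub-convex combinations, so each term is bounded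
by `δ` or `κ`, which dominate every single `|δⱼ|` and `|κⱼ|`.
-/

lemma abs_le_sqrt_sum_sq {ι : Type*} [Fintype ι] (f : ι → ℝ) (j : ι) :
    |f j| ≤ √(∑ k, f k ^ 2) :=
  Real.abs_le_sqrt <| Finset.single_le_sum (fun k _ => sq_nonneg (f k)) (Finset.mem_univ j)

lemma abs_weighted_sum_div_le {s w₁ w₂ u v M : ℝ} (hs : 0 < s) (hw₁ : 0 ≤ w₁) (hw₂ : 0 ≤ w₂)
    (hw : w₁ + w₂ ≤ s) (hu : |u| ≤ M) (hv : |v| ≤ M) :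
    |(w₁ * u + w₂ * v) / s| ≤ M := by
  have hM : 0 ≤ M := (abs_nonneg u).trans hu
  rw [abs_div, abs_of_pos hs, div_le_iff₀ hs]
  calc |w₁ * u + w₂ * v| ≤ w₁ * |u| + w₂ * |v| := by
        simpa only [abs_mul, abs_of_nonneg hw₁, abs_of_nonneg hw₂] using abs_add_le (w₁ * u) (w₂ * v)
    _ ≤ w₁ * M + w₂ * M := by gcongr
    _ ≤ M * s := by nlinarith

lemma drift_eq {s p a₀ a₁ a₂ b₁ b₂ : ℝ} (hs : s ≠ 0) (h₁ : a₁ ≠ 0) (h₂ : a₂ ≠ 0) :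
    p * a₀ * (a₁ + b₁) - p * a₁ * (a₂ + b₂) =
      p * a₁ * ((a₀ - a₂)
        + (a₀ * (s * b₁ / a₁ - a₁) + a₂ * -(s * b₂ / a₂ - a₂)) / s
        + (a₀ * (a₁ - a₂) + a₂ * (a₀ - a₂)) / s) := by
  field_simp
  ring

lemma abs_drift_le {s p a₀ a₁ a₂ b₁ b₂ D K : ℝ} (hs : 0 < s) (hp : 0 ≤ p)
    (h₀ : 0 ≤ a₀) (h₁ : 0 < a₁) (h₂ : 0 < a₂) (hsum : a₀ + a₂ ≤ s)
    (hD₀₂ : |a₀ - a₂| ≤ D) (hD₁₂ : |a₁ - a₂| ≤ D)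
    (hK₁ : |s * b₁ / a₁ - a₁| ≤ K) (hK₂ : |s * b₂ / a₂ - a₂| ≤ K) :
    |p * a₀ * (a₁ + b₁) - p * a₁ * (a₂ + b₂)| ≤ p * a₁ * (2 * D + K) := by
  rw [drift_eq hs.ne' h₁.ne' h₂.ne', abs_mul, abs_of_nonneg (by positivity)]
  gcongr
  have hK := abs_weighted_sum_div_le hs h₀ h₂.le hsum hK₁ (by rwa [abs_neg])
  have hD := abs_weighted_sum_div_le hs h₀ h₂.le hsum hD₁₂ hD₀₂
  linarith [abs_add_three (a₀ - a₂) ((a₀ * (s * b₁ / a₁ - a₁) + a₂ * -(s * b₂ / a₂ - a₂)) / s)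
    ((a₀ * (a₁ - a₂) + a₂ * (a₀ - a₂)) / s)]

lemma ZMod.three_sub_one_add_self_add_add_one (a : ZMod 3 → ℝ) (i : ZMod 3) :
    a (i - 1) + a i + a (i + 1) = a 0 + a 1 + a 2 := by
  fin_cases i
  · exact add_rotate (a 2) (a 0) (a 1)
  · rfl
  · exact (add_rotate (a 0) (a 1) (a 2)).symm

lemma ZMod.three_sub_one_sub_one (i : ZMod 3) : i - 1 - 1 = i + 1 := by
  fin_cases i <;> rfl

theorem oscillator_species_drift_bound_general
    (s p : ℝ) (hs : 0 < s) (hp : 0 < p)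
    (a app : ZMod 3 → ℝ)
    (hpos : ∀ i, 0 < a i)
    (hsum : a 0 + a 1 + a 2 = s) :
    ∀ i : ZMod 3,
      |p * a (i - 1) * (a i + app i) - p * a i * (a (i + 1) + app (i + 1))|
        ≤ p * a i * (2 * Real.sqrt (∑ j : ZMod 3, (a j - a (j - 1)) ^ 2)
            + Real.sqrt (∑ j : ZMod 3, (s * app j / a j - a j) ^ 2)) := by
  intro i
  have hδ := abs_le_sqrt_sum_sq (fun j => a j - a (j - 1))
  have hκ := abs_le_sqrt_sum_sq (fun j => s * app j / a j - a j)
  have hD₀₂ := hδ (i - 1)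
  have hD₁₂ := hδ (i + 1)
  simp only [ZMod.three_sub_one_sub_one, add_sub_cancel_right] at hD₀₂ hD₁₂
  have hsum' := ZMod.three_sub_one_add_self_add_add_one a i
  exact abs_drift_le hs hp.le (hpos _).le (hpos i) (hpos _) (by linarith [hpos i])
    hD₀₂ (by rwa [abs_sub_comm]) (hκ i) (hκ (i + 1))

/-- With no source, the drift of each species satisfies `|ȧᵢ| ≤ p·aᵢ·(2δ + κ)`. -/
theorem oscillator_species_drift_bound
    (s p : ℝ) (hs : 0 < s) (hs1 : s ≤ 1) (hp : 0 < p)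
    (a app : ZMod 3 → ℝ)
    (hpos : ∀ i, 0 < a i)
    (hsum : a 0 + a 1 + a 2 = s)
    (happ : ∀ i, 0 ≤ app i ∧ app i ≤ a i) :
    ∀ i : ZMod 3,
      |p * a (i - 1) * (a i + app i) - p * a i * (a (i + 1) + app (i + 1))|
        ≤ p * a i * (2 * Real.sqrt (∑ j : ZMod 3, (a j - a (j - 1)) ^ 2)
            + Real.sqrt (∑ j : ZMod 3, (s * app j / a j - a j) ^ 2)) :=
  oscillator_species_drift_bound_general s p hs hp a app hpos hsum
end

section
/- Fix a real s > 0 and reals a₁, a₂, a₃ > 0 with a₁+a₂+a₃ = s. Define δᵢ = aᵢ − aᵢ₋₁ (indices cyclic mod 3), δ = √(δ₁²+δ₂²+δ₃²), and η = √(−Σᵢ₌₁³ ln(aᵢ/(s/3))) (the quantity under the square root is nonnegative by AM–GM). If 0 < δ ≤ s/12, then δ/s < η < (3/2)·(δ/s); equivalently, δ ∈ ((2/3)·s·η, s·η). -/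
/-!
Put `tᵢ = 3aᵢ/s - 1`, so that `aᵢ/(s/3) = 1 + tᵢ`, `∑ tᵢ = 0` and `∑ tᵢ² = 3δ²/s²`.
By Taylor's theorem `log (1 + t) = t - t²/2 + O(|t|³)`, and for `|t| ≤ 1/5` the remainder is at
most `(7/60) t²`. Since `∑ tᵢ = 0`, the linear terms cancel and `η² = -∑ log (1 + tᵢ)` lies within
`(7/60) ∑ tᵢ²` of `∑ tᵢ² / 2`. As `1/3 < 1/2 - 7/60` and `1/2 + 7/60 < 3/4`, this gives
`δ²/s² < η² < (9/4) δ²/s²`; the hypothesis `δ ≤ s/12` is what makes every `|tᵢ| ≤ 1/5`.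
-/

open Real Finset

lemma abs_log_one_add_sub_le {t : ℝ} (ht : |t| ≤ 1 / 5) :
    |log (1 + t) - (t - t ^ 2 / 2)| ≤ 7 / 60 * t ^ 2 := by
  have hR := abs_log_sub_add_sum_range_le (x := -t) (by rw [abs_neg]; linarith) 3
  norm_num [sum_range_succ] at hR
  have hrem : |t| ^ 4 / (1 - |t|) ≤ t ^ 2 / 20 := by
    rw [div_le_iff₀ (by linarith), ← sq_abs t]
    nlinarith [abs_nonneg t, sq_nonneg |t|, mul_le_mul_of_nonneg_left ht (sq_nonneg |t|)]
  have hcube : |t ^ 3 / 3| ≤ t ^ 2 / 15 := by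
    rw [abs_div, abs_pow, ← sq_abs t]
    nlinarith [abs_nonneg t, mul_le_mul_of_nonneg_left ht (sq_nonneg |t|)]
  calc |log (1 + t) - (t - t ^ 2 / 2)|
      = |(-t + t ^ 2 / 2 + (-t) ^ 3 / 3 + log (1 + t)) + t ^ 3 / 3| := by congr 1; ring
    _ ≤ |t| ^ 4 / (1 - |t|) + t ^ 2 / 15 := (abs_add_le _ _).trans (add_le_add hR hcube)
    _ ≤ 7 / 60 * t ^ 2 := by linarith

section

variable {ι : Type*} [Fintype ι] {t : ι → ℝ}

lemma abs_neg_sum_log_one_add_sub_le (hsum : ∑ i, t i = 0) (ht : ∀ i, |t i| ≤ 1 / 5) :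
    |-∑ i, log (1 + t i) - (∑ i, t i ^ 2) / 2| ≤ 7 / 60 * ∑ i, t i ^ 2 := by
  calc |-∑ i, log (1 + t i) - (∑ i, t i ^ 2) / 2|
      = |∑ i, (log (1 + t i) - (t i - t i ^ 2 / 2))| := by
        rw [← abs_neg]; simp only [sum_sub_distrib, hsum, ← sum_div]; ring_nf
    _ ≤ ∑ i, |log (1 + t i) - (t i - t i ^ 2 / 2)| := abs_sum_le_sum_abs _ _
    _ ≤ ∑ i, 7 / 60 * t i ^ 2 := sum_le_sum fun i _ ↦ abs_log_one_add_sub_le (ht i)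
    _ = 7 / 60 * ∑ i, t i ^ 2 := (mul_sum _ _ _).symm

lemma neg_sum_log_one_add_bounds (hsum : ∑ i, t i = 0) (hpos : 0 < ∑ i, t i ^ 2)
    (hsmall : ∑ i, t i ^ 2 ≤ 1 / 25) :
    (∑ i, t i ^ 2) / 3 < -∑ i, log (1 + t i) ∧ -∑ i, log (1 + t i) < 3 / 4 * ∑ i, t i ^ 2 := by
  have ht (i : ι) : |t i| ≤ 1 / 5 := by
    refine abs_le_of_sq_le_sq ?_ (by norm_num)
    calc t i ^ 2 ≤ ∑ j, t j ^ 2 := single_le_sum (fun j _ ↦ sq_nonneg (t j)) (mem_univ i)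
      _ ≤ (1 / 5) ^ 2 := by linarith
  obtain ⟨hlo, hhi⟩ := abs_le.mp (abs_neg_sum_log_one_add_sub_le hsum ht)
  constructor <;> linarith

end

lemma ZMod.sum_univ_three {M : Type*} [AddCommMonoid M] (f : ZMod 3 → M) :
    ∑ i, f i = f 0 + f 1 + f 2 :=
  Fin.sum_univ_three f

lemma ZMod.sum_sq_sub_sub_one (a : ZMod 3 → ℝ) :
    ∑ i, (a i - a (i - 1)) ^ 2 = 3 * ∑ i, (a i - (∑ j, a j) / 3) ^ 2 := by
  simp only [ZMod.sum_univ_three, show (0 - 1 : ZMod 3) = 2 from rfl,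
    show (1 - 1 : ZMod 3) = 0 from rfl, show (2 - 1 : ZMod 3) = 1 from rfl]
  ring

theorem eta_delta_relation_general
    (s : ℝ)
    (a : ZMod 3 → ℝ)
    (hsum : a 0 + a 1 + a 2 = s)
    (hδpos : 0 < Real.sqrt (∑ i : ZMod 3, (a i - a (i - 1)) ^ 2))
    (hδ : Real.sqrt (∑ i : ZMod 3, (a i - a (i - 1)) ^ 2) ≤ s / 12) :
    Real.sqrt (∑ i : ZMod 3, (a i - a (i - 1)) ^ 2) / s
        < Real.sqrt (-(∑ i : ZMod 3, Real.log (a i / (s / 3)))) ∧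
      Real.sqrt (-(∑ i : ZMod 3, Real.log (a i / (s / 3))))
        < 3 / 2 * (Real.sqrt (∑ i : ZMod 3, (a i - a (i - 1)) ^ 2) / s) := by
  set Δ := ∑ i : ZMod 3, (a i - a (i - 1)) ^ 2
  have hs : 0 < s := by linarith
  have hΔpos : 0 < Δ := sqrt_pos.mp hδpos
  have hΔle : Δ ≤ (s / 12) ^ 2 := (sqrt_le_left (by positivity)).mp hδ
  have hΔ : Δ = 3 * ∑ i, (a i - s / 3) ^ 2 := by
    rw [← hsum, ← ZMod.sum_univ_three a]; exact ZMod.sum_sq_sub_sub_one a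
  set t : ZMod 3 → ℝ := fun i ↦ a i / (s / 3) - 1
  have ht_sum : ∑ i, t i = 0 := by
    simp only [t, ZMod.sum_univ_three]; field_simp; linarith
  have ht_sq : ∑ i, t i ^ 2 = 3 * (Δ / s ^ 2) := by
    simp only [t, hΔ, ZMod.sum_univ_three]; field_simp
  have hq : Δ / s ^ 2 ≤ 1 / 144 := by rw [div_le_iff₀ (by positivity)]; linarith
  obtain ⟨hlo, hhi⟩ := neg_sum_log_one_add_bounds ht_sum (by rw [ht_sq]; positivity)
    (by rw [ht_sq]; linarith)
  rw [ht_sq] at hlo hhi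
  have hlog : ∑ i, log (a i / (s / 3)) = ∑ i, log (1 + t i) := by simp only [t, add_sub_cancel]
  have hδ_sq : (√Δ / s) ^ 2 = Δ / s ^ 2 := by rw [div_pow, sq_sqrt hΔpos.le]
  rw [hlog]
  constructor
  · rw [lt_sqrt (by positivity), hδ_sq]; linarith
  · rw [sqrt_lt' (by positivity), mul_pow, hδ_sq]; linarith

/-- For `a₁+a₂+a₃ = s`, `η = √(−Σ ln(aᵢ/(s/3)))` and `δ = √(Σ(aᵢ−aᵢ₋₁)²)`:
if `0 < δ ≤ s/12` then `δ/s < η < (3/2)(δ/s)`. -/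
theorem eta_delta_relation
    (s : ℝ) (hs : 0 < s)
    (a : ZMod 3 → ℝ)
    (hpos : ∀ i, 0 < a i)
    (hsum : a 0 + a 1 + a 2 = s)
    (hδpos : 0 < Real.sqrt (∑ i : ZMod 3, (a i - a (i - 1)) ^ 2))
    (hδ : Real.sqrt (∑ i : ZMod 3, (a i - a (i - 1)) ^ 2) ≤ s / 12) :
    Real.sqrt (∑ i : ZMod 3, (a i - a (i - 1)) ^ 2) / s
        < Real.sqrt (-(∑ i : ZMod 3, Real.log (a i / (s / 3)))) ∧
      Real.sqrt (-(∑ i : ZMod 3, Real.log (a i / (s / 3))))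
        < 3 / 2 * (Real.sqrt (∑ i : ZMod 3, (a i - a (i - 1)) ^ 2) / s) :=
  eta_delta_relation_general s a hsum hδpos hδ
end

section
/- Fix reals s with 0 < s ≤ 1, p with 0 < p ≤ s/18, and a real n > 0. Let aᵢ, aᵢ⁺⁺ : ℝ → ℝ (i ∈ {1,2,3}, indices cyclic mod 3) be a trajectory of the source-free oscillator dynamics (aᵢ' = p·aᵢ₋₁(aᵢ + aᵢ⁺⁺) − p·aᵢ(aᵢ₊₁ + aᵢ₊₁⁺⁺), (aᵢ⁺⁺)' = aᵢ² − s·aᵢ⁺⁺, aᵢ > 0, a₁+a₂+a₃ ≡ s, 0 ≤ aᵢ⁺⁺ ≤ aᵢ). Define κ, δ, η as usual and set η* = √(η² + 1/n) and κ* = √(κ² + 1/n). Then at every time t with δ(t) ≤ s/12, the functions η* and κ* are differentiable and satisfy (η*)'(t) ≥ (p·s/9)·η*(t) − (p/2)·κ*(t) − (2·p·s)/(9·√n) and (κ*)'(t) ≤ −(s/2)·κ*(t) + 18·p·s·η*(t) + s/√n. -/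
/-!
Near the balanced state every `aᵢ` lies within `s/18` of `s/3` (from `δ ≤ s/12` and `Σ aᵢ = s`),
so second-order bounds on `log (1 + y)` make `η² = -Σ log (3aᵢ/s)` comparable to `δ²`:
`(4/9) s² η² ≤ δ² ≤ s² η²`.

Along the flow the terms of `Σ aᵢ'/aᵢ` telescope under the cyclic shift, leaving
`s (η²)' = p (δ²/2 + Σ κᵢ δᵢ)`, and Cauchy–Schwarz bounds this from below by `p (δ²/2 - κ δ)`.
For the other potential, `κᵢ' = -s κᵢ - aᵢ' (s aᵢ⁺⁺/aᵢ² + 1)` with `|aᵢ'| ≤ p s (δ + κ/2)`,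
so `(κ²)' ≤ -2 s κ² + 30 p s κ (δ + κ/2)`.
Dividing by `2η*`, resp. `2κ*`, and using `v / √(v + 1/n) ≥ √(v + 1/n) - 1/√n` gives both inequalities.
-/

open Real Finset

noncomputable section

namespace Oscillator

lemma log_one_add_le_sub_sq_div_three {y : ℝ} (hy : |y| ≤ 1 / 6) :
    log (1 + y) ≤ y - y ^ 2 / 3 := by
  obtain ⟨hy₁, hy₂⟩ := abs_le.mp hy
  rw [log_le_iff_le_exp (by linarith)]
  have hexp := one_sub_div_pow_le_exp_neg (n := 4) (t := -(y - y ^ 2 / 3)) (by push_cast; nlinarith)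
  rw [neg_neg] at hexp
  refine le_trans ?_ hexp
  push_cast
  nlinarith [sq_nonneg y, sq_nonneg (y ^ 2), sq_nonneg (y ^ 3), sq_nonneg (y * (1 - 6 * y)),
    sq_nonneg (y * (1 + 6 * y))]

lemma sub_three_div_four_mul_sq_le_log_one_add {y : ℝ} (hy : |y| ≤ 1 / 6) :
    y - 3 / 4 * y ^ 2 ≤ log (1 + y) := by
  obtain ⟨hy₁, hy₂⟩ := abs_le.mp hy
  rw [le_log_iff_exp_le (by linarith)]
  have hexp := one_sub_div_pow_le_exp_neg (n := 4) (t := y - 3 / 4 * y ^ 2) (by push_cast; nlinarith)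
  push_cast at hexp
  have hpoly : 1 ≤ (1 + y) * (1 - (y - 3 / 4 * y ^ 2) / 4) ^ 4 := by
    nlinarith [mul_nonneg (sub_nonneg.2 hy₁) (sub_nonneg.2 hy₂), sq_nonneg y, sq_nonneg (y ^ 2),
      sq_nonneg (y ^ 3), sq_nonneg (y * (1 - 6 * y)), sq_nonneg (y * (1 + 6 * y))]
  have hinv : exp (y - 3 / 4 * y ^ 2) * exp (-(y - 3 / 4 * y ^ 2)) = 1 := by
    rw [← exp_add, add_neg_cancel, exp_zero]
  nlinarith [mul_le_mul_of_nonneg_left hexp (by linarith : (0 : ℝ) ≤ 1 + y),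
    exp_pos (y - 3 / 4 * y ^ 2)]

lemma abs_le_sqrt_sum_sq {ι : Type*} [Fintype ι] (f : ι → ℝ) (i : ι) :
    |f i| ≤ √(∑ j, f j ^ 2) :=
  abs_le_sqrt (single_le_sum (fun j _ => sq_nonneg (f j)) (mem_univ i))

lemma sqrt_add_inv_sub_le_div {v n : ℝ} (hv : 0 ≤ v) (hn : 0 < n) :
    √(v + 1 / n) - 1 / √n ≤ v / √(v + 1 / n) := by
  have hw : 0 < √(v + 1 / n) := sqrt_pos.mpr (by positivity)
  have hw2 : √(v + 1 / n) ^ 2 = v + 1 / n := sq_sqrt (by positivity)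
  have hinv : (1 / √n) ^ 2 = 1 / n := by rw [div_pow, one_pow, sq_sqrt hn.le]
  have hle : 1 / √n ≤ √(v + 1 / n) := by
    rw [← sqrt_one, ← sqrt_div' 1 hn.le]
    exact sqrt_le_sqrt (by linarith)
  rw [le_div_iff₀ hw]
  nlinarith [mul_le_mul_of_nonneg_left hle (by positivity : (0 : ℝ) ≤ 1 / √n)]

section Estimates

variable {s p n L Q δ : ℝ}

lemma eta_star_drift_of_estimates {L' : ℝ} (hs : 0 < s) (hp : 0 < p) (hn : 0 < n)
    (hL : 0 ≤ L) (hQ : 0 ≤ Q) (hδL : δ ≤ s * √L) (hLδ : 4 / 9 * (s ^ 2 * L) ≤ δ ^ 2)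
    (hL' : p * (δ ^ 2 / 2 - √Q * δ) ≤ s * L') :
    p * s / 9 * √(L + 1 / n) - p / 2 * √(Q + 1 / n) - 2 * p * s / (9 * √n)
      ≤ L' / (2 * √(L + 1 / n)) := by
  set w := √(L + 1 / n)
  set k := √(Q + 1 / n)
  have hw : 0 < w := sqrt_pos.mpr (by positivity)
  have hLw := sqrt_add_inv_sub_le_div hL hn
  rw [le_div_iff₀ hw] at hLw
  have hcross : √Q * δ ≤ s * (k * w) := by
    calc √Q * δ ≤ √Q * (s * √L) := mul_le_mul_of_nonneg_left hδL (sqrt_nonneg Q)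
      _ = s * (√Q * √L) := by ring
      _ ≤ s * (k * w) := by gcongr <;> exact sqrt_le_sqrt (by linarith [one_div_pos.mpr hn])
  have hL's : 2 / 9 * p * s * L - p * (k * w) ≤ L' := by
    rw [← mul_le_mul_iff_right₀ hs]
    nlinarith
  have hps : 0 ≤ 2 / 9 * p * s := by positivity
  rw [le_div_iff₀ (by positivity), show (p * s / 9 * w - p / 2 * k - 2 * p * s / (9 * √n)) * (2 * w)
    = 2 / 9 * p * s * ((w - 1 / √n) * w) - p * (k * w) - 2 / 9 * p * s * (1 / √n * w) by ring]
  linarith [mul_le_mul_of_nonneg_left hLw hps, mul_nonneg hps (by positivity : 0 ≤ 1 / √n * w)]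

lemma kappa_star_drift_of_estimates {T : ℝ} (hs : 0 < s) (hs1 : s ≤ 1) (hp : 0 ≤ p)
    (hp18 : p ≤ s / 18) (hn : 0 < n) (hQ : 0 ≤ Q) (hδL : δ ≤ s * √L)
    (hT : -(15 * p * s * √Q * (δ + √Q / 2)) ≤ T) :
    (-2 * s * Q - 2 * T) / (2 * √(Q + 1 / n))
      ≤ -(s / 2) * √(Q + 1 / n) + 18 * p * s * √(L + 1 / n) + s / √n := by
  set w := √(L + 1 / n)
  set k := √(Q + 1 / n)
  have hk : 0 < k := sqrt_pos.mpr (by positivity)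
  have hQk := sqrt_add_inv_sub_le_div hQ hn
  rw [le_div_iff₀ hk] at hQk
  have hcross : √Q * δ ≤ k * w := by
    calc √Q * δ ≤ √Q * (s * √L) := mul_le_mul_of_nonneg_left hδL (sqrt_nonneg Q)
      _ ≤ √Q * (1 * √L) := by gcongr
      _ ≤ k * w := by
        rw [one_mul]; gcongr <;> exact sqrt_le_sqrt (by linarith [one_div_pos.mpr hn])
  have hps : 0 ≤ p * s := by positivity
  have hpQ : p * (s * Q) ≤ s / 18 * (s * Q) := by gcongr
  have hsQ : s * (s * Q) ≤ 1 * (s * Q) := by gcongr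
  rw [show 15 * p * s * √Q * (δ + √Q / 2) = 15 * p * s * (√Q * δ) + 15 / 2 * (p * (s * (√Q * √Q)))
    by ring, mul_self_sqrt hQ] at hT
  rw [div_le_iff₀ (by positivity), show (-(s / 2) * k + 18 * p * s * w + s / √n) * (2 * k)
    = -s * (k * k) + 36 * (p * s * (k * w)) + 2 * (s * (1 / √n * k)) by ring]
  linarith [mul_le_mul_of_nonneg_left hQk hs.le, mul_le_mul_of_nonneg_left hcross hps,
    mul_nonneg hps (mul_nonneg hk.le (sqrt_nonneg (L + 1 / n))),
    mul_nonneg hs.le (by positivity : 0 ≤ 1 / √n * k), mul_nonneg hs.le hQ]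

end Estimates

/-- Here and below `x` and `b` stand for the state `a(t)` and `a⁺⁺(t)` at a fixed time. -/
def kappa {ι : Type*} (s : ℝ) (x b : ι → ℝ) (i : ι) : ℝ := s * b i / x i - x i

def kappaSq {ι : Type*} [Fintype ι] (s : ℝ) (x b : ι → ℝ) : ℝ := ∑ i, kappa s x b i ^ 2

def deltaSq {m : ℕ} [NeZero m] (x : ZMod m → ℝ) : ℝ := ∑ i, (x i - x (i - 1)) ^ 2

def etaSq (s : ℝ) (x : ZMod 3 → ℝ) : ℝ := log (s ^ 3 / 27) - log (x 0 * x 1 * x 2)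

def velocity {m : ℕ} (p : ℝ) (x b : ZMod m → ℝ) (i : ZMod m) : ℝ :=
  p * x (i - 1) * (x i + b i) - p * x i * (x (i + 1) + b (i + 1))

lemma kappaSq_nonneg {ι : Type*} [Fintype ι] (s : ℝ) (x b : ι → ℝ) : 0 ≤ kappaSq s x b :=
  sum_nonneg fun _ _ => sq_nonneg _

lemma deltaSq_nonneg {m : ℕ} [NeZero m] (x : ZMod m → ℝ) : 0 ≤ deltaSq x :=
  sum_nonneg fun _ _ => sq_nonneg _

section Cyclic

variable {m : ℕ} [NeZero m]

lemma sum_sub_comp_sub_one (f : ZMod m → ℝ) : ∑ i, (f (i - 1) - f i) = 0 := by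
  rw [sum_sub_distrib, Fintype.sum_equiv (Equiv.subRight 1) (fun i => f (i - 1)) f fun _ => rfl,
    sub_self]

lemma sum_sub_comp_add_one (f : ZMod m → ℝ) : ∑ i, (f i - f (i + 1)) = 0 := by
  rw [sum_sub_distrib, Fintype.sum_equiv (Equiv.addRight 1) (fun i => f (i + 1)) f fun _ => rfl,
    sub_self]

lemma mul_sum_velocity_div (s p : ℝ) {x : ZMod m → ℝ} (b : ZMod m → ℝ) (hx : ∀ i, x i ≠ 0) :
    s * ∑ i, velocity p x b i / x i =
      -p * (∑ i, kappa s x b i * (x i - x (i - 1)) + deltaSq x / 2) := by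
  set F : ZMod m → ℝ := fun j => s * x j + x j ^ 2 / 2
  set H : ZMod m → ℝ := fun j => s * x j + x j * kappa s x b j + x j ^ 2
  have key : ∀ i, s * (velocity p x b i / x i) =
      -p * (kappa s x b i * (x i - x (i - 1)) + (x i - x (i - 1)) ^ 2 / 2)
        + p * ((F (i - 1) - F i) + (H i - H (i + 1))) := by
    intro i
    simp only [F, H, velocity, kappa]
    field_simp [hx i, hx (i + 1)]
    ring
  simp_rw [deltaSq, mul_sum, key, sum_add_distrib, ← mul_sum, sum_add_distrib,
    sum_sub_comp_sub_one, sum_sub_comp_add_one, ← sum_div, mul_add]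
  ring

end Cyclic

section ThreeOscillators

variable {s p : ℝ} {x b : ZMod 3 → ℝ}

lemma sum_zmod_three (f : ZMod 3 → ℝ) : ∑ i, f i = f 0 + f 1 + f 2 := Fin.sum_univ_three f

lemma deltaSq_zmod_three (x : ZMod 3 → ℝ) :
    deltaSq x = (x 0 - x 2) ^ 2 + (x 1 - x 0) ^ 2 + (x 2 - x 1) ^ 2 :=
  sum_zmod_three _

lemma etaSq_nonneg (hx : ∀ i, 0 < x i) (hsum : x 0 + x 1 + x 2 = s) : 0 ≤ etaSq s x := by
  have h0 := hx 0
  have h1 := hx 1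
  have h2 := hx 2
  rw [etaSq, sub_nonneg, ← hsum]
  refine log_le_log (by positivity) ?_
  nlinarith [mul_nonneg h0.le (sq_nonneg (x 1 - x 2)), mul_nonneg h1.le (sq_nonneg (x 0 - x 2)),
    mul_nonneg h2.le (sq_nonneg (x 0 - x 1)), mul_nonneg (add_nonneg (add_nonneg h0.le h1.le) h2.le)
      (add_nonneg (add_nonneg (sq_nonneg (x 0 - x 1)) (sq_nonneg (x 1 - x 2)))
        (sq_nonneg (x 0 - x 2)))]

lemma abs_three_mul_sub_le (hsum : x 0 + x 1 + x 2 = s) (hδ : √(deltaSq x) ≤ s / 12)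
    (i : ZMod 3) : |3 * x i - s| ≤ s / 6 := by
  have h : ∀ j, |x j - x (j - 1)| ≤ s / 12 :=
    fun j => (abs_le_sqrt_sum_sq (fun j => x j - x (j - 1)) j).trans hδ
  obtain ⟨h0, h0'⟩ := abs_le.mp (h 0)
  obtain ⟨h1, h1'⟩ := abs_le.mp (h 1)
  obtain ⟨h2, h2'⟩ := abs_le.mp (h 2)
  rw [show (0 : ZMod 3) - 1 = 2 from rfl] at h0 h0'
  rw [show (1 : ZMod 3) - 1 = 0 from rfl] at h1 h1'
  rw [show (2 : ZMod 3) - 1 = 1 from rfl] at h2 h2'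
  rw [abs_le]
  obtain rfl | rfl | rfl : i = 0 ∨ i = 1 ∨ i = 2 := by revert i; decide
  all_goals constructor <;> linarith

lemma deltaSq_bounds (hs : 0 < s) (hsum : x 0 + x 1 + x 2 = s)
    (h3 : ∀ i, |3 * x i - s| ≤ s / 6) :
    4 / 9 * (s ^ 2 * etaSq s x) ≤ deltaSq x ∧ deltaSq x ≤ s ^ 2 * etaSq s x := by
  obtain ⟨y, rfl⟩ : ∃ y : ZMod 3 → ℝ, x = fun i => s * (1 + y i) / 3 :=
    ⟨fun i => 3 * x i / s - 1, by ext i; field_simp; ring⟩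
  simp only at hsum h3
  have hy : ∀ i, |y i| ≤ 1 / 6 := fun i => by
    have h := h3 i
    rw [show 3 * (s * (1 + y i) / 3) - s = s * y i by ring, abs_mul, abs_of_pos hs] at h
    nlinarith
  have hy0 : y 0 + y 1 + y 2 = 0 := by nlinarith
  have hlog : etaSq s (fun i => s * (1 + y i) / 3)
      = -(log (1 + y 0) + log (1 + y 1) + log (1 + y 2)) := by
    have h1 : ∀ i, 0 < 1 + y i := fun i => by linarith [abs_le.mp (hy i)]
    rw [etaSq, show s * (1 + y 0) / 3 * (s * (1 + y 1) / 3) * (s * (1 + y 2) / 3)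
      = s ^ 3 / 27 * ((1 + y 0) * (1 + y 1) * (1 + y 2)) by ring,
      log_mul (by positivity) (by have := h1 0; have := h1 1; have := h1 2; positivity),
      log_mul (mul_pos (h1 0) (h1 1)).ne' (h1 2).ne', log_mul (h1 0).ne' (h1 1).ne']
    ring
  rw [deltaSq_zmod_three, hlog]
  have hup := fun i => log_one_add_le_sub_sq_div_three (hy i)
  have hlo := fun i => sub_three_div_four_mul_sq_le_log_one_add (hy i)
  constructor
  · nlinarith [hlo 0, hlo 1, hlo 2]
  · nlinarith [hup 0, hup 1, hup 2]

lemma abs_velocity_le {δ K : ℝ} (hs : 0 < s) (hp : 0 ≤ p) (hx : ∀ i, 0 < x i ∧ x i ≤ s / 2)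
    (hgap : ∀ i, |x i - x (i - 1)| ≤ δ) (hκ : ∀ i, |kappa s x b i| ≤ K) (i : ZMod 3) :
    |velocity p x b i| ≤ p * s * (δ + K / 2) := by
  have hA : |x (i - 1) - x (i + 1)| ≤ δ := by
    simpa [show i - 1 - 1 = i + 1 by revert i; decide] using hgap (i - 1)
  have hB : |x i - x (i + 1)| ≤ δ := by
    simpa [abs_sub_comm] using hgap (i + 1)
  have hmul : ∀ (j : ZMod 3) {y c : ℝ}, |y| ≤ c → |x j * y| ≤ s / 2 * c := fun j {y} {c} hy => by
    rw [abs_mul, abs_of_pos (hx j).1]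
    exact mul_le_mul (hx j).2 hy (abs_nonneg _) (by linarith [(hx j).1])
  have hsplit : velocity p x b i = p * x i / s * (s * (x (i - 1) - x (i + 1))
      + (x (i - 1) * kappa s x b i - x (i + 1) * kappa s x b (i + 1))
      + (x i * (x (i - 1) - x (i + 1)) + x (i + 1) * (x i - x (i + 1)))) := by
    unfold velocity kappa
    field_simp [(hx i).1.ne', (hx (i + 1)).1.ne']
    ring
  have hinner : |s * (x (i - 1) - x (i + 1))
      + (x (i - 1) * kappa s x b i - x (i + 1) * kappa s x b (i + 1))
      + (x i * (x (i - 1) - x (i + 1)) + x (i + 1) * (x i - x (i + 1)))| ≤ s * (2 * δ + K) := by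
    have h1 : |s * (x (i - 1) - x (i + 1))| ≤ s * δ := by
      rw [abs_mul, abs_of_pos hs]; exact mul_le_mul_of_nonneg_left hA hs.le
    have h2 := abs_sub (x (i - 1) * kappa s x b i) (x (i + 1) * kappa s x b (i + 1))
    have h3 := abs_add_le (x i * (x (i - 1) - x (i + 1))) (x (i + 1) * (x i - x (i + 1)))
    have := abs_add_three (s * (x (i - 1) - x (i + 1)))
      (x (i - 1) * kappa s x b i - x (i + 1) * kappa s x b (i + 1))
      (x i * (x (i - 1) - x (i + 1)) + x (i + 1) * (x i - x (i + 1)))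
    linarith [hmul (i - 1) (hκ i), hmul (i + 1) (hκ (i + 1)), hmul i hA, hmul (i + 1) hB]
  have hcoef : |p * x i / s| ≤ p / 2 := by
    rw [abs_of_nonneg (by have := (hx i).1; positivity), div_le_iff₀ hs]
    nlinarith [(hx i).2]
  rw [hsplit, abs_mul]
  calc |p * x i / s| * |_| ≤ p / 2 * (s * (2 * δ + K)) :=
        mul_le_mul hcoef hinner (abs_nonneg _) (by positivity)
    _ = p * s * (δ + K / 2) := by ring

lemma abs_sum_kappa_mul_velocity_le {δ K : ℝ} (hs : 0 < s) (hp : 0 ≤ p)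
    (hx : ∀ i, s / 4 ≤ x i ∧ x i ≤ s / 2) (hb : ∀ i, 0 ≤ b i ∧ b i ≤ x i)
    (hgap : ∀ i, |x i - x (i - 1)| ≤ δ) (hκ : ∀ i, |kappa s x b i| ≤ K) :
    |∑ i, kappa s x b i * velocity p x b i * (s * b i / x i ^ 2 + 1)|
      ≤ 15 * p * s * K * (δ + K / 2) := by
  have hx0 : ∀ i, 0 < x i := fun i => by linarith [hx i]
  have hK : 0 ≤ K := (abs_nonneg _).trans (hκ 0)
  have hδ : 0 ≤ δ := (abs_nonneg _).trans (hgap 0)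
  have hweight : ∀ i, |s * b i / x i ^ 2 + 1| ≤ 5 := fun i => by
    have : s * b i / x i ^ 2 ≤ 4 := by
      rw [div_le_iff₀ (pow_pos (hx0 i) 2)]
      nlinarith [hx i, hb i]
    rw [abs_of_nonneg (by have := (hb i).1; positivity)]
    linarith
  have hterm : ∀ i, |kappa s x b i * velocity p x b i * (s * b i / x i ^ 2 + 1)|
      ≤ K * (p * s * (δ + K / 2)) * 5 := fun i => by
    rw [abs_mul, abs_mul]
    exact mul_le_mul (mul_le_mul (hκ i)
      (abs_velocity_le hs hp (fun j => ⟨hx0 j, (hx j).2⟩) hgap hκ i) (abs_nonneg _) hK)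
      (hweight i) (abs_nonneg _) (by positivity)
  calc |∑ i, kappa s x b i * velocity p x b i * (s * b i / x i ^ 2 + 1)|
      ≤ ∑ i, |kappa s x b i * velocity p x b i * (s * b i / x i ^ 2 + 1)| :=
        abs_sum_le_sum_abs _ _
    _ ≤ ∑ _i : ZMod 3, K * (p * s * (δ + K / 2)) * 5 := sum_le_sum fun i _ => hterm i
    _ = 15 * p * s * K * (δ + K / 2) := by
        rw [sum_const, card_univ, ZMod.card, nsmul_eq_mul]; push_cast; ring

lemma eta_star_drift {n : ℝ} (hs : 0 < s) (hp : 0 < p) (hn : 0 < n) (hx : ∀ i, 0 < x i)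
    (hsum : x 0 + x 1 + x 2 = s) (hδ : √(deltaSq x) ≤ s / 12) :
    p * s / 9 * √(etaSq s x + 1 / n) - p / 2 * √(kappaSq s x b + 1 / n) - 2 * p * s / (9 * √n)
      ≤ (-∑ i, velocity p x b i / x i) / (2 * √(etaSq s x + 1 / n)) := by
  obtain ⟨hlo, hhi⟩ := deltaSq_bounds hs hsum (abs_three_mul_sub_le hsum hδ)
  have hcs : -∑ i, kappa s x b i * (x i - x (i - 1)) ≤ √(kappaSq s x b) * √(deltaSq x) := by
    have h := sum_mul_le_sqrt_mul_sqrt univ (fun i => -kappa s x b i) (fun i => x i - x (i - 1))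
    simp only [neg_mul, sum_neg_distrib, neg_sq] at h
    exact h
  have hdrift := mul_sum_velocity_div s p b fun i => (hx i).ne'
  refine eta_star_drift_of_estimates (δ := √(deltaSq x)) hs hp hn (etaSq_nonneg hx hsum)
    (kappaSq_nonneg s x b) ?_ (by rwa [sq_sqrt (deltaSq_nonneg x)]) ?_
  · calc √(deltaSq x) ≤ √(s ^ 2 * etaSq s x) := sqrt_le_sqrt hhi
      _ = s * √(etaSq s x) := by rw [sqrt_mul (sq_nonneg s), sqrt_sq hs.le]
  · rw [sq_sqrt (deltaSq_nonneg x), mul_neg, hdrift]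
    linarith [mul_le_mul_of_nonneg_left hcs hp.le]

lemma kappa_star_drift {n : ℝ} (hs : 0 < s) (hs1 : s ≤ 1) (hp : 0 < p) (hp18 : p ≤ s / 18)
    (hn : 0 < n) (hsum : x 0 + x 1 + x 2 = s) (hb : ∀ i, 0 ≤ b i ∧ b i ≤ x i) (hδ : √(deltaSq x) ≤ s / 12) :
    (-2 * s * kappaSq s x b - 2 * ∑ i, kappa s x b i * velocity p x b i * (s * b i / x i ^ 2 + 1))
        / (2 * √(kappaSq s x b + 1 / n))
      ≤ -(s / 2) * √(kappaSq s x b + 1 / n) + 18 * p * s * √(etaSq s x + 1 / n) + s / √n := by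
  have h3 := abs_three_mul_sub_le hsum hδ
  have hhi := (deltaSq_bounds hs hsum h3).2
  have hxb : ∀ i, s / 4 ≤ x i ∧ x i ≤ s / 2 := fun i => by
    constructor <;> linarith [abs_le.mp (h3 i)]
  have hT := (neg_abs_le _).trans' (neg_le_neg (abs_sum_kappa_mul_velocity_le hs hp.le hxb hb
    (abs_le_sqrt_sum_sq (fun j => x j - x (j - 1))) (abs_le_sqrt_sum_sq (kappa s x b))))
  refine kappa_star_drift_of_estimates hs hs1 hp.le hp18 hn (kappaSq_nonneg s x b) ?_ hT
  calc √(deltaSq x) ≤ √(s ^ 2 * etaSq s x) := sqrt_le_sqrt hhi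
    _ = s * √(etaSq s x) := by rw [sqrt_mul (sq_nonneg s), sqrt_sq hs.le]

end ThreeOscillators

lemma hasDerivAt_kappa {s t v : ℝ} {x b : ℝ → ℝ} (hx : HasDerivAt x v t)
    (hb : HasDerivAt b (x t ^ 2 - s * b t) t) (hxt : x t ≠ 0) :
    HasDerivAt (fun τ => s * b τ / x τ - x τ)
      (-s * (s * b t / x t - x t) - v * (s * b t / x t ^ 2 + 1)) t :=
  (((hb.const_mul s).div hx hxt).sub hx).congr_deriv (by field_simp; ring)

lemma hasDerivAt_kappaSq {ι : Type*} [Fintype ι] {s t : ℝ} {a app : ι → ℝ → ℝ} {v : ι → ℝ}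
    (hda : ∀ i, HasDerivAt (a i) (v i) t)
    (hdapp : ∀ i, HasDerivAt (app i) (a i t ^ 2 - s * app i t) t) (ha : ∀ i, a i t ≠ 0) :
    HasDerivAt (fun τ => kappaSq s (a · τ) (app · τ))
      (-2 * s * kappaSq s (a · t) (app · t)
        - 2 * ∑ i, kappa s (a · t) (app · t) i * v i * (s * app i t / a i t ^ 2 + 1)) t := by
  refine (HasDerivAt.fun_sum (u := univ)
    fun i _ => (hasDerivAt_kappa (hda i) (hdapp i) (ha i)).pow 2).congr_deriv ?_
  simp only [kappaSq, kappa, mul_sum, ← sum_sub_distrib]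
  refine sum_congr rfl fun i _ => ?_
  push_cast
  ring

lemma hasDerivAt_etaSq {s t : ℝ} {a : ZMod 3 → ℝ → ℝ} {v : ZMod 3 → ℝ}
    (hda : ∀ i, HasDerivAt (a i) (v i) t) (ha : ∀ i, a i t ≠ 0) :
    HasDerivAt (fun τ => etaSq s (a · τ)) (-∑ i, v i / a i t) t := by
  refine ((((hda 0).mul (hda 1)).mul (hda 2)).log (by simp [ha])).const_sub _ |>.congr_deriv ?_
  rw [sum_zmod_three, Pi.mul_apply, Pi.mul_apply, Pi.mul_apply]
  field_simp [ha]

end Oscillator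

end

open Oscillator in
/-- Along a trajectory of the source-free oscillator dynamics with `p ≤ s/18`,
at every time with `δ(t) ≤ s/12`, the regularized potentials
`η* = √(η² + 1/n)` and `κ* = √(κ² + 1/n)` are differentiable and satisfy
`(η*)' ≥ (ps/9)η* − (p/2)κ* − 2ps/(9√n)` and
`(κ*)' ≤ −(s/2)κ* + 18psη* + s/√n`. -/
theorem regularized_potentials_drift
    (s p : ℝ) (hs : 0 < s) (hs1 : s ≤ 1) (hp : 0 < p) (hp18 : p ≤ s / 18)
    (n : ℝ) (hn : 0 < n)
    (a app : ZMod 3 → ℝ → ℝ)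
    (hpos : ∀ i t, 0 < a i t)
    (hsum : ∀ t, a 0 t + a 1 t + a 2 t = s)
    (happ : ∀ i t, 0 ≤ app i t ∧ app i t ≤ a i t)
    (hda : ∀ i t, HasDerivAt (a i)
      (p * a (i - 1) t * (a i t + app i t)
        - p * a i t * (a (i + 1) t + app (i + 1) t)) t)
    (hdapp : ∀ i t, HasDerivAt (app i) ((a i t) ^ 2 - s * app i t) t) :
    ∀ t : ℝ,
      Real.sqrt (∑ i : ZMod 3, (a i t - a (i - 1) t) ^ 2) ≤ s / 12 →
      (DifferentiableAt ℝ
          (fun τ => Real.sqrt ((Real.log (s ^ 3 / 27)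
            - Real.log (a 0 τ * a 1 τ * a 2 τ)) + 1 / n)) t ∧
        DifferentiableAt ℝ
          (fun τ => Real.sqrt ((∑ i : ZMod 3, (s * app i τ / a i τ - a i τ) ^ 2) + 1 / n)) t) ∧
      deriv (fun τ => Real.sqrt ((Real.log (s ^ 3 / 27)
            - Real.log (a 0 τ * a 1 τ * a 2 τ)) + 1 / n)) t
          ≥ p * s / 9 * Real.sqrt ((Real.log (s ^ 3 / 27)
              - Real.log (a 0 t * a 1 t * a 2 t)) + 1 / n)
            - p / 2 * Real.sqrt ((∑ i : ZMod 3, (s * app i t / a i t - a i t) ^ 2) + 1 / n)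
            - 2 * p * s / (9 * Real.sqrt n) ∧
      deriv (fun τ => Real.sqrt ((∑ i : ZMod 3, (s * app i τ / a i τ - a i τ) ^ 2) + 1 / n)) t
          ≤ -(s / 2) * Real.sqrt ((∑ i : ZMod 3, (s * app i t / a i t - a i t) ^ 2) + 1 / n)
            + 18 * p * s * Real.sqrt ((Real.log (s ^ 3 / 27)
              - Real.log (a 0 t * a 1 t * a 2 t)) + 1 / n)
            + s / Real.sqrt n := by
  intro t hδ
  have hx : ∀ i, 0 < a i t := (hpos · t)
  have hη := ((hasDerivAt_etaSq (s := s) (hda · t) (hx · |>.ne')).add_const (1 / n)).sqrt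
    (by have := etaSq_nonneg hx (hsum t); positivity)
  have hκ := ((hasDerivAt_kappaSq (hda · t) (hdapp · t) (hx · |>.ne')).add_const (1 / n)).sqrt
    (by have := kappaSq_nonneg s (a · t) (app · t); positivity)
  refine ⟨⟨hη.differentiableAt, hκ.differentiableAt⟩, ?_, ?_⟩
  · exact (eta_star_drift (b := (app · t)) hs hp hn hx (hsum t) hδ).trans_eq hη.deriv.symm
  · exact hκ.deriv.trans_le (kappa_star_drift hs hs1 hp hp18 hn (hsum t) (happ · t) hδ)
end

section
/- Fix reals s with 0 < s ≤ 1, p > 0, x ≥ 0, an index i ∈ {1,2,3} (indices cyclic mod 3), reals a₁, a₂, a₃ ≥ 0 with a₁+a₂+a₃ = s, and reals aⱼ⁺⁺ with 0 ≤ aⱼ⁺⁺ ≤ aⱼ for j ∈ {1,2,3}. If aᵢ₊₁ < 0.25·s and aᵢ₋₁ < 0.05·s, then x·(s/3 − aᵢ₋₁) + p·aᵢ₊₁·(aᵢ₋₁ + aᵢ₋₁⁺⁺) − p·aᵢ₋₁·(aᵢ + aᵢ⁺⁺) ≤ x·s/3 − 0.2·p·s·aᵢ₋₁. -/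
/-!
Write `b = aᵢ₋₁`, `c = aᵢ₊₁`, `d = aᵢ`. Since `0 ≤ aⱼ⁺⁺ ≤ aⱼ`, the exchange terms are at most
`p·b·(2c − d)`, and the source term is at most `x·s/3`. As `b + c + d = s`, the smallness of
`b` and `c` forces `d > 0.7·s`, whence `2c − d ≤ −0.2·s`.
-/

theorem ZMod.cyclic_sum_three {M : Type*} [AddCommMonoid M] (f : ZMod 3 → M)
    (i : ZMod 3) : f i + f (i + 1) + f (i - 1) = f 0 + f 1 + f 2 := by
  fin_cases i
  · rfl
  · exact (add_rotate _ _ _).symm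
  · exact add_rotate _ _ _

theorem exchange_le_mul_two_sub {p b c d bpp dpp : ℝ} (hp : 0 ≤ p) (hb : 0 ≤ b) (hc : 0 ≤ c)
    (hbpp : bpp ≤ b) (hdpp : 0 ≤ dpp) :
    p * c * (b + bpp) - p * b * (d + dpp) ≤ p * b * (2 * c - d) := by
  have gain : p * c * (b + bpp) ≤ p * c * (2 * b) := by gcongr; linarith
  have loss : p * b * d ≤ p * b * (d + dpp) := by gcongr; linarith
  linarith

theorem drift_bound_region_two_decay_general
    (s p x : ℝ) (hp : 0 < p) (hx : 0 ≤ x)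
    (i : ZMod 3)
    (a app : ZMod 3 → ℝ)
    (hnn : ∀ j, 0 ≤ a j)
    (hsum : a 0 + a 1 + a 2 = s)
    (happ : ∀ j, 0 ≤ app j ∧ app j ≤ a j)
    (h1 : a (i + 1) < 0.25 * s) (h2 : a (i - 1) < 0.05 * s) :
    x * (s / 3 - a (i - 1)) + p * a (i + 1) * (a (i - 1) + app (i - 1))
        - p * a (i - 1) * (a i + app i)
      ≤ x * s / 3 - 0.2 * p * s * a (i - 1) := by
  have hcyc := ZMod.cyclic_sum_three a i
  have hmajor : 2 * a (i + 1) - a i ≤ -(0.2 * s) := by linarith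
  have hexchange := exchange_le_mul_two_sub (d := a i) hp.le (hnn (i - 1)) (hnn (i + 1))
    (happ (i - 1)).2 (happ i).1
  have hdecay : p * a (i - 1) * (2 * a (i + 1) - a i) ≤ p * a (i - 1) * -(0.2 * s) :=
    mul_le_mul_of_nonneg_left hmajor (mul_nonneg hp.le (hnn (i - 1)))
  have hsource : 0 ≤ x * a (i - 1) := mul_nonneg hx (hnn (i - 1))
  linarith

/-- If `aᵢ₊₁ < 0.25s` and `aᵢ₋₁ < 0.05s`, then the drift of species `i−1`
satisfies `ȧᵢ₋₁ ≤ xs/3 − 0.2psaᵢ₋₁`. -/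
theorem drift_bound_region_two_decay
    (s p x : ℝ) (hs : 0 < s) (hs1 : s ≤ 1) (hp : 0 < p) (hx : 0 ≤ x)
    (i : ZMod 3)
    (a app : ZMod 3 → ℝ)
    (hnn : ∀ j, 0 ≤ a j)
    (hsum : a 0 + a 1 + a 2 = s)
    (happ : ∀ j, 0 ≤ app j ∧ app j ≤ a j)
    (h1 : a (i + 1) < 0.25 * s) (h2 : a (i - 1) < 0.05 * s) :
    x * (s / 3 - a (i - 1)) + p * a (i + 1) * (a (i - 1) + app (i - 1))
        - p * a (i - 1) * (a i + app i)
      ≤ x * s / 3 - 0.2 * p * s * a (i - 1) :=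
  drift_bound_region_two_decay_general s p x hp hx i a app hnn hsum happ h1 h2
end
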